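/- arXiv:math/0309117 — 10 statements merged into one kernel-verified Lean document; each statement's English description precedes it below -/
import Mathlib

section
/- Let X be an inner product space over ℂ, x, y ∈ X and a, A ∈ ℂ. If ‖x − ((a+A)/2)•y‖ ≤ (1/2)·|A − a|·‖y‖, then 0 ≤ ‖x‖²·‖y‖² − |⟨x,y⟩|² ≤ (1/4)·|A − a|²·‖y‖⁴ − |((a+A)/2)·‖y‖² − ⟨x,y⟩|². -/
/-! For any scalar `c`, expanding both squares gives the identity
`‖y‖² ‖x - c • y‖² = (‖x‖² ‖y‖² - |⟪y, x⟫|²) + |c ‖y‖² - ⟪y, x⟫|²`.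
The first summand is nonnegative by Cauchy–Schwarz, and with `c = (a + A) / 2` the hypothesis
bounds the left side by `|A - a|² ‖y‖⁴ / 4`. -/

open scoped InnerProductSpace ComplexConjugate

section

variable {𝕜 E : Type*} [RCLike 𝕜] [NormedAddCommGroup E] [InnerProductSpace 𝕜 E]

theorem RCLike.norm_mul_ofReal_sub_sq (c t : 𝕜) (r : ℝ) :
    ‖c * (r : 𝕜) - t‖ ^ 2 = ‖c‖ ^ 2 * r ^ 2 - 2 * r * RCLike.re (c * conj t) + ‖t‖ ^ 2 := by
  rw [norm_sub_rev, @norm_sub_sq 𝕜 𝕜, RCLike.inner_apply, norm_mul, RCLike.norm_ofReal, mul_pow,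
    sq_abs, show c * r * conj t = r * (c * conj t) by ring, RCLike.re_ofReal_mul]
  ring

theorem sq_norm_mul_sq_norm_sub_smul (x y : E) (c : 𝕜) :
    ‖y‖ ^ 2 * ‖x - c • y‖ ^ 2 =
      ‖x‖ ^ 2 * ‖y‖ ^ 2 - ‖⟪y, x⟫_𝕜‖ ^ 2 + ‖c * (‖y‖ : 𝕜) ^ 2 - ⟪y, x⟫_𝕜‖ ^ 2 := by
  have hx : ‖x - c • y‖ ^ 2 = ‖x‖ ^ 2 - 2 * RCLike.re (c * conj ⟪y, x⟫_𝕜) + ‖c‖ ^ 2 * ‖y‖ ^ 2 := by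
    rw [norm_sub_sq (𝕜 := 𝕜), inner_smul_right, norm_smul, mul_pow, inner_conj_symm]
  have hc := RCLike.norm_mul_ofReal_sub_sq c ⟪y, x⟫_𝕜 (‖y‖ ^ 2)
  push_cast at hc
  rw [hx, hc]
  ring

theorem sq_norm_mul_sq_norm_sub_sq_norm_inner_le_of_norm_sub_smul_le {x y : E} {c : 𝕜} {r : ℝ}
    (h : ‖x - c • y‖ ≤ r * ‖y‖) :
    ‖x‖ ^ 2 * ‖y‖ ^ 2 - ‖⟪y, x⟫_𝕜‖ ^ 2 ≤
      r ^ 2 * ‖y‖ ^ 4 - ‖c * (‖y‖ : 𝕜) ^ 2 - ⟪y, x⟫_𝕜‖ ^ 2 := by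
  have hsq : ‖x - c • y‖ ^ 2 ≤ (r * ‖y‖) ^ 2 := pow_le_pow_left₀ (norm_nonneg _) h 2
  have := mul_le_mul_of_nonneg_left hsq (sq_nonneg ‖y‖)
  rw [sq_norm_mul_sq_norm_sub_smul] at this
  linarith

end

theorem reverse_cbs_refined {X : Type*} [NormedAddCommGroup X]
    [InnerProductSpace ℂ X] (x y : X) (a A : ℂ)
    (h : ‖x - ((a + A) / 2) • y‖ ≤ (1 / 2) * ‖A - a‖ * ‖y‖) :
    0 ≤ ‖x‖ ^ 2 * ‖y‖ ^ 2 - ‖⟪y, x⟫_ℂ‖ ^ 2 ∧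
      ‖x‖ ^ 2 * ‖y‖ ^ 2 - ‖⟪y, x⟫_ℂ‖ ^ 2 ≤
        (1 / 4) * ‖A - a‖ ^ 2 * ‖y‖ ^ 4 -
          ‖((a + A) / 2) * (‖y‖ : ℂ) ^ 2 - ⟪y, x⟫_ℂ‖ ^ 2 := by
  refine ⟨?_, ?_⟩
  · have hCS : ‖⟪y, x⟫_ℂ‖ ^ 2 ≤ (‖y‖ * ‖x‖) ^ 2 :=
      pow_le_pow_left₀ (norm_nonneg _) (norm_inner_le_norm y x) 2
    linarith
  · convert sq_norm_mul_sq_norm_sub_sq_norm_inner_le_of_norm_sub_smul_le h using 2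
    · ring
    · rfl -- the coercions `RCLike.ofReal` and `Complex.ofReal` agree only definitionally
end

section
/- Let X be an inner product space over ℂ, x, y ∈ X and a, A ∈ ℂ. Then the identity ‖x‖²·‖y‖² − |⟨x,y⟩|² = Re[(A·‖y‖² − ⟨x,y⟩)·(conj(⟨x,y⟩) − conj(a)·‖y‖²)] − ‖y‖²·Re⟨A•y − x, x − a•y⟩ holds. -/
open scoped InnerProductSpace ComplexConjugate

section

variable {𝕜 X : Type*} [RCLike 𝕜] [NormedAddCommGroup X] [InnerProductSpace 𝕜 X]

theorem inner_sub_smul_smul_sub_eq (x y : X) (a A : 𝕜) :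
    ⟪x - a • y, A • y - x⟫_𝕜 =
      A * conj ⟪y, x⟫_𝕜 - (‖x‖ : 𝕜) ^ 2 - conj a * A * (‖y‖ : 𝕜) ^ 2 + conj a * ⟪y, x⟫_𝕜 := by
  simp only [inner_sub_left, inner_sub_right, inner_smul_left, inner_smul_right,
    inner_self_eq_norm_sq_to_K, inner_conj_symm]
  ring

theorem norm_sq_mul_norm_sq_sub_norm_inner_sq_eq (x y : X) (a A : 𝕜) :
    ((‖x‖ ^ 2 * ‖y‖ ^ 2 - ‖⟪y, x⟫_𝕜‖ ^ 2 : ℝ) : 𝕜) =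
      (A * (‖y‖ : 𝕜) ^ 2 - ⟪y, x⟫_𝕜) * (conj ⟪y, x⟫_𝕜 - conj a * (‖y‖ : 𝕜) ^ 2) -
        (‖y‖ : 𝕜) ^ 2 * ⟪x - a • y, A • y - x⟫_𝕜 := by
  rw [inner_sub_smul_smul_sub_eq]
  push_cast
  -- with `‖p‖² = p * conj p` the identity becomes a ring identity
  rw [← RCLike.mul_conj]
  ring

end

theorem cbs_re_identity {X : Type*} [NormedAddCommGroup X]
    [InnerProductSpace ℂ X] (x y : X) (a A : ℂ) :
    ‖x‖ ^ 2 * ‖y‖ ^ 2 - ‖⟪y, x⟫_ℂ‖ ^ 2 =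
      ((A * (‖y‖ : ℂ) ^ 2 - ⟪y, x⟫_ℂ) *
        (conj ⟪y, x⟫_ℂ - conj a * (‖y‖ : ℂ) ^ 2)).re -
        ‖y‖ ^ 2 * (⟪x - a • y, A • y - x⟫_ℂ).re := by
  have h := congrArg Complex.re (norm_sq_mul_norm_sq_sub_norm_inner_sq_eq x y a A)
  simp only [RCLike.ofReal_eq_complex_ofReal] at h
  rwa [Complex.ofReal_re, Complex.sub_re, ← Complex.ofReal_pow, Complex.re_ofReal_mul,
    Complex.ofReal_pow] at h
end

section
/- Let X be an inner product space over ℂ, x, y ∈ X and a, A ∈ ℂ. If Re⟨A•y − x, x − a•y⟩ ≥ 0, then 0 ≤ ‖x‖²·‖y‖² − |⟨x,y⟩|² ≤ (1/4)·|A − a|²·‖y‖⁴ − Re⟨A•y − x, x − a•y⟩·‖y‖². -/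
/-!
With `m = (a + A) / 2`, `d = (A - a) / 2` and `u = x - m • y` one has `x - a • y = u + d • y` and
`A • y - x = d • y - u`, so `Re ⟪x - a • y, A • y - x⟫ = ‖d • y‖² - ‖u‖²` and the right-hand side
collapses to `‖x - m • y‖² ‖y‖²`. The Gram quantity `‖x‖² ‖y‖² - ‖⟪y, x⟫‖²` does not change when `x`
is replaced by `x - m • y`, hence it is at most `‖x - m • y‖² ‖y‖²`.
-/

open scoped InnerProductSpace ComplexConjugate

section
variable {𝕜 E : Type*} [RCLike 𝕜] [NormedAddCommGroup E] [InnerProductSpace 𝕜 E]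

open RCLike

theorem re_inner_add_sub_eq_norm_sq_sub_norm_sq (u v : E) :
    re ⟪u + v, v - u⟫_𝕜 = ‖v‖ ^ 2 - ‖u‖ ^ 2 := by
  have hsymm := inner_re_symm (𝕜 := 𝕜) u v
  simp only [inner_add_left, inner_sub_right, map_add, map_sub, inner_self_eq_norm_sq] at hsymm ⊢
  linarith

theorem norm_sub_smul_sq_mul_sub_norm_inner_sq (x y : E) (c : 𝕜) :
    ‖x - c • y‖ ^ 2 * ‖y‖ ^ 2 - ‖⟪y, x - c • y⟫_𝕜‖ ^ 2 =
      ‖x‖ ^ 2 * ‖y‖ ^ 2 - ‖⟪y, x⟫_𝕜‖ ^ 2 := by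
  have hinner : ⟪y, x - c • y⟫_𝕜 = ⟪y, x⟫_𝕜 - c * (‖y‖ ^ 2 : ℝ) := by
    rw [inner_sub_right, inner_smul_right, inner_self_eq_norm_sq_to_K]; push_cast; ring
  rw [hinner, norm_sub_sq (𝕜 := 𝕜) x, norm_sub_sq (𝕜 := 𝕜) ⟪y, x⟫_𝕜, inner_smul_right,
    ← inner_conj_symm y x]
  simp only [norm_smul, RCLike.inner_apply, mul_pow, norm_mul, norm_ofReal, mul_re, mul_im,
    conj_re, conj_im, ofReal_re, ofReal_im, sq_abs]
  ring

theorem norm_sq_mul_norm_sq_sub_norm_inner_sq_nonneg (x y : E) :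
    0 ≤ ‖x‖ ^ 2 * ‖y‖ ^ 2 - ‖⟪y, x⟫_𝕜‖ ^ 2 := by
  rw [sub_nonneg, ← mul_pow, mul_comm]
  exact pow_le_pow_left₀ (norm_nonneg _) (norm_inner_le_norm y x) 2

theorem norm_sq_mul_norm_sq_sub_norm_inner_sq_le (x y : E) (c : 𝕜) :
    ‖x‖ ^ 2 * ‖y‖ ^ 2 - ‖⟪y, x⟫_𝕜‖ ^ 2 ≤ ‖x - c • y‖ ^ 2 * ‖y‖ ^ 2 := by
  rw [← norm_sub_smul_sq_mul_sub_norm_inner_sq x y c]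
  exact sub_le_self _ (sq_nonneg _)

end

theorem reverse_cbs_with_re_general {X : Type*} [NormedAddCommGroup X]
    [InnerProductSpace ℂ X] (x y : X) (a A : ℂ) :
    0 ≤ ‖x‖ ^ 2 * ‖y‖ ^ 2 - ‖⟪y, x⟫_ℂ‖ ^ 2 ∧
      ‖x‖ ^ 2 * ‖y‖ ^ 2 - ‖⟪y, x⟫_ℂ‖ ^ 2 ≤
        (1 / 4) * ‖A - a‖ ^ 2 * ‖y‖ ^ 4 -
          (⟪x - a • y, A • y - x⟫_ℂ).re * ‖y‖ ^ 2 := by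
  set m : ℂ := (a + A) / 2
  set d : ℂ := (A - a) / 2
  have hre : (⟪x - a • y, A • y - x⟫_ℂ).re = ‖d • y‖ ^ 2 - ‖x - m • y‖ ^ 2 := by
    rw [← re_inner_add_sub_eq_norm_sq_sub_norm_sq (𝕜 := ℂ)]
    congr 2 <;> module
  have hd : ‖d • y‖ ^ 2 = 1 / 4 * ‖A - a‖ ^ 2 * ‖y‖ ^ 2 := by
    rw [norm_smul, norm_div, Complex.norm_ofNat]; ring
  refine ⟨norm_sq_mul_norm_sq_sub_norm_inner_sq_nonneg x y, ?_⟩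
  rw [hre, hd]
  linear_combination norm_sq_mul_norm_sq_sub_norm_inner_sq_le x y m

theorem reverse_cbs_with_re {X : Type*} [NormedAddCommGroup X]
    [InnerProductSpace ℂ X] (x y : X) (a A : ℂ)
    (h : 0 ≤ (⟪x - a • y, A • y - x⟫_ℂ).re) :
    0 ≤ ‖x‖ ^ 2 * ‖y‖ ^ 2 - ‖⟪y, x⟫_ℂ‖ ^ 2 ∧
      ‖x‖ ^ 2 * ‖y‖ ^ 2 - ‖⟪y, x⟫_ℂ‖ ^ 2 ≤
        (1 / 4) * ‖A - a‖ ^ 2 * ‖y‖ ^ 4 -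
          (⟪x - a • y, A • y - x⟫_ℂ).re * ‖y‖ ^ 2 :=
  reverse_cbs_with_re_general x y a A
end

section
/- Let X be an inner product space over ℂ, x, y ∈ X and a, A ∈ ℂ with A ≠ −a. If ‖x − ((a+A)/2)•y‖ ≤ (1/2)·|A − a|·‖y‖, then ‖x‖·‖y‖ − |⟨x,y⟩| ≤ (1/4)·(|A − a|²/|A + a|)·‖y‖². -/
open scoped InnerProductSpace ComplexConjugate

/- Expanding ‖x - c • y‖² and bounding the cross term by ‖c‖ ‖⟪y, x⟫‖ gives
‖x‖² + ‖c‖² ‖y‖² ≤ ‖x - c • y‖² + 2 ‖c‖ ‖⟪y, x⟫‖, while AM-GM gives 2 ‖c‖ ‖x‖ ‖y‖ ≤ ‖x‖² + ‖c‖² ‖y‖².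
With c = (a + A) / 2 we have 2 ‖c‖ = ‖A + a‖ ≠ 0, and the hypothesis bounds ‖x - c • y‖². -/

theorem two_mul_norm_mul_sub_norm_inner_le {𝕜 E : Type*} [RCLike 𝕜] [NormedAddCommGroup E]
    [InnerProductSpace 𝕜 E] (x y : E) (c : 𝕜) :
    2 * ‖c‖ * (‖x‖ * ‖y‖ - ‖⟪y, x⟫_𝕜‖) ≤ ‖x - c • y‖ ^ 2 := by
  have hexpand : ‖x - c • y‖ ^ 2 = ‖x‖ ^ 2 - 2 * RCLike.re (c * ⟪x, y⟫_𝕜) + ‖c‖ ^ 2 * ‖y‖ ^ 2 := by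
    rw [@norm_sub_sq 𝕜, inner_smul_right, norm_smul, mul_pow]
  have hcross : RCLike.re (c * ⟪x, y⟫_𝕜) ≤ ‖c‖ * ‖⟪y, x⟫_𝕜‖ := by
    calc RCLike.re (c * ⟪x, y⟫_𝕜) ≤ ‖c * ⟪x, y⟫_𝕜‖ := RCLike.re_le_norm _
      _ = ‖c‖ * ‖⟪y, x⟫_𝕜‖ := by rw [norm_mul, norm_inner_symm]
  nlinarith [sq_nonneg (‖x‖ - ‖c‖ * ‖y‖)]

theorem reverse_cbs_additive {X : Type*} [NormedAddCommGroup X]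
    [InnerProductSpace ℂ X] (x y : X) (a A : ℂ) (hA : A ≠ -a)
    (h : ‖x - ((a + A) / 2) • y‖ ≤ (1 / 2) * ‖A - a‖ * ‖y‖) :
    ‖x‖ * ‖y‖ - ‖⟪y, x⟫_ℂ‖ ≤
      (1 / 4) * (‖A - a‖ ^ 2 / ‖A + a‖) * ‖y‖ ^ 2 := by
  have hpos : 0 < ‖A + a‖ := norm_pos_iff.mpr (by rwa [Ne, add_eq_zero_iff_eq_neg])
  have htwo : 2 * ‖(a + A) / 2‖ = ‖A + a‖ := by
    rw [norm_div, add_comm, Complex.norm_two]; ring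
  have hsq : ‖x - ((a + A) / 2) • y‖ ^ 2 ≤ ((1 / 2) * ‖A - a‖ * ‖y‖) ^ 2 :=
    pow_le_pow_left₀ (norm_nonneg _) h 2
  have hgap := two_mul_norm_mul_sub_norm_inner_le x y ((a + A) / 2)
  rw [htwo] at hgap
  rw [mul_div_assoc', div_mul_eq_mul_div, le_div_iff₀ hpos]
  linarith
end

section
/- Let X be a real inner product space, x, y ∈ X and 0 < m < M. If ⟨M•y − x, x − m•y⟩ ≥ 0, then 0 ≤ ‖x‖·‖y‖ − |⟨x,y⟩| ≤ (1/2)·((√M − √m)²/√(M·m))·|⟨x,y⟩|. -/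
open scoped RealInnerProductSpace

/-!
Expanding the hypothesis gives `‖x‖² + M m ‖y‖² ≤ (M + m) ⟪x, y⟫`, and by AM-GM the left side is at
least `2 √(M m) ‖x‖ ‖y‖`. Hence `⟪x, y⟫ ≥ 0` and `‖x‖ ‖y‖ ≤ (M + m) / (2 √(M m)) ⟪x, y⟫`; subtracting
`⟪x, y⟫` leaves the factor `(M + m - 2 √(M m)) / (2 √(M m)) = (√M - √m)² / (2 √(M m))`.
-/

theorem Real.sq_sqrt_sub_sqrt {a b : ℝ} (ha : 0 ≤ a) (hb : 0 ≤ b) :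
    (√a - √b) ^ 2 = a + b - 2 * √(a * b) := by
  rw [sub_sq, Real.sq_sqrt ha, Real.sq_sqrt hb, Real.sqrt_mul ha]
  ring

section InnerProductSpace

variable {X : Type*} [NormedAddCommGroup X] [InnerProductSpace ℝ X]

theorem real_inner_smul_sub_sub_smul (x y : X) (a b : ℝ) :
    ⟪a • y - x, x - b • y⟫ = (a + b) * ⟪x, y⟫ - ‖x‖ ^ 2 - a * b * ‖y‖ ^ 2 := by
  simp only [inner_sub_left, inner_sub_right, real_inner_smul_left, real_inner_smul_right,
    real_inner_comm y x, real_inner_self_eq_norm_sq]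
  ring

theorem two_mul_sqrt_mul_norm_mul_norm_le_of_inner_nonneg {x y : X} {a b : ℝ} (hab : 0 ≤ a * b)
    (h : 0 ≤ ⟪a • y - x, x - b • y⟫) :
    2 * √(a * b) * (‖x‖ * ‖y‖) ≤ (a + b) * ⟪x, y⟫ := by
  have hexp : ‖x‖ ^ 2 + a * b * ‖y‖ ^ 2 ≤ (a + b) * ⟪x, y⟫ := by
    rw [real_inner_smul_sub_sub_smul] at h
    linarith
  have amgm : 2 * ‖x‖ * (√(a * b) * ‖y‖) ≤ ‖x‖ ^ 2 + (√(a * b) * ‖y‖) ^ 2 :=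
    two_mul_le_add_sq _ _
  rw [mul_pow, Real.sq_sqrt hab] at amgm
  linarith

end InnerProductSpace

theorem reverse_cbs_real_additive {X : Type*} [NormedAddCommGroup X]
    [InnerProductSpace ℝ X] (x y : X) (m M : ℝ) (hm : 0 < m) (hmM : m < M)
    (h : 0 ≤ ⟪M • y - x, x - m • y⟫) :
    0 ≤ ‖x‖ * ‖y‖ - |⟪x, y⟫| ∧
      ‖x‖ * ‖y‖ - |⟪x, y⟫| ≤
        (1 / 2) * ((Real.sqrt M - Real.sqrt m) ^ 2 / Real.sqrt (M * m)) *
          |⟪x, y⟫| := by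
  have hM : 0 < M := hm.trans hmM
  have hs : 0 < √(M * m) := by positivity
  have key := two_mul_sqrt_mul_norm_mul_norm_le_of_inner_nonneg (mul_pos hM hm).le h
  have hinner : 0 ≤ ⟪x, y⟫ := by
    have : 0 ≤ (M + m) * ⟪x, y⟫ := le_trans (by positivity) key
    exact nonneg_of_mul_nonneg_right this (by linarith)
  rw [abs_of_nonneg hinner, Real.sq_sqrt_sub_sqrt hM.le hm.le]
  refine ⟨sub_nonneg.2 (real_inner_le_norm x y), ?_⟩
  rw [show (1 / 2) * ((M + m - 2 * √(M * m)) / √(M * m)) * ⟪x, y⟫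
      = ((M + m) * ⟪x, y⟫ - 2 * √(M * m) * ⟪x, y⟫) / (2 * √(M * m)) by field_simp,
    le_div_iff₀ (by positivity)]
  linarith
end

section
/- Let X be a complex inner product space. Define the standard 2-inner product (x,y|z) := ⟨x,y⟩·‖z‖² − ⟨x,z⟩·⟨z,y⟩ for x, y, z ∈ X. Then for all x, y, z ∈ X, the Cauchy–Bunyakovsky–Schwarz inequality |(x,y|z)|² ≤ (x,x|z)·(y,y|z) holds; that is, |⟨x,y⟩·‖z‖² − ⟨x,z⟩·⟨z,y⟩|² ≤ (‖x‖²·‖z‖² − |⟨x,z⟩|²)·(‖y‖²·‖z‖² − |⟨y,z⟩|²). -/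
open scoped InnerProductSpace

/-! Writing `w x = ‖z‖² x - ⟨x, z⟩ z`, one has `⟨w x, w y⟩ = ‖z‖² (x, y | z)`, so the inequality is
the Cauchy–Schwarz inequality for `w x` and `w y` divided by `‖z‖⁴` (both sides vanish if `z = 0`). -/

namespace InnerProductSpace

variable (𝕜 : Type*) {X : Type*} [RCLike 𝕜] [NormedAddCommGroup X] [InnerProductSpace 𝕜 X]

/-- The standard 2-inner product `(x, y | z)`; Mathlib's inner product is linear in the second
argument, so the paper's `⟨x, y⟩` is `⟪y, x⟫_𝕜`. -/
def twoInner (x y z : X) : 𝕜 := ⟪y, x⟫_𝕜 * (‖z‖ : 𝕜) ^ 2 - ⟪z, x⟫_𝕜 * ⟪y, z⟫_𝕜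

theorem twoInner_self (x z : X) :
    twoInner 𝕜 x x z = ((‖x‖ ^ 2 * ‖z‖ ^ 2 - ‖⟪z, x⟫_𝕜‖ ^ 2 : ℝ) : 𝕜) := by
  rw [twoInner, inner_self_eq_norm_sq_to_K, ← inner_conj_symm x z, RCLike.mul_conj]
  push_cast
  rfl

/-- `‖z‖²` times the component of `x` orthogonal to `z`. -/
def scaledOrthComponent (z x : X) : X := ((‖z‖ : 𝕜) ^ 2) • x - ⟪z, x⟫_𝕜 • z

theorem inner_scaledOrthComponent (x y z : X) :
    ⟪scaledOrthComponent 𝕜 z y, scaledOrthComponent 𝕜 z x⟫_𝕜 =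
      (‖z‖ : 𝕜) ^ 2 * twoInner 𝕜 x y z := by
  simp only [scaledOrthComponent, twoInner, inner_sub_left, inner_sub_right, inner_smul_left,
    inner_smul_right, inner_self_eq_norm_sq_to_K, map_pow, RCLike.conj_ofReal, inner_conj_symm]
  ring

theorem norm_sq_scaledOrthComponent (x z : X) :
    ‖scaledOrthComponent 𝕜 z x‖ ^ 2 = ‖z‖ ^ 2 * (‖x‖ ^ 2 * ‖z‖ ^ 2 - ‖⟪z, x⟫_𝕜‖ ^ 2) := by
  have h := inner_scaledOrthComponent 𝕜 x x z
  rw [inner_self_eq_norm_sq_to_K, twoInner_self] at h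
  exact_mod_cast h

theorem norm_twoInner_sq_le (x y z : X) :
    ‖twoInner 𝕜 x y z‖ ^ 2 ≤
      (‖x‖ ^ 2 * ‖z‖ ^ 2 - ‖⟪z, x⟫_𝕜‖ ^ 2) * (‖y‖ ^ 2 * ‖z‖ ^ 2 - ‖⟪z, y⟫_𝕜‖ ^ 2) := by
  rcases eq_or_ne z 0 with rfl | hz
  · simp [twoInner]
  have hcs := pow_le_pow_left₀ (norm_nonneg _)
    (norm_inner_le_norm (𝕜 := 𝕜) (scaledOrthComponent 𝕜 z y) (scaledOrthComponent 𝕜 z x)) 2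
  rw [mul_pow, norm_sq_scaledOrthComponent, norm_sq_scaledOrthComponent,
    inner_scaledOrthComponent, norm_mul, norm_pow, RCLike.norm_ofReal, abs_norm] at hcs
  have hz4 : 0 < (‖z‖ ^ 2) ^ 2 := by positivity
  refine le_of_mul_le_mul_left ?_ hz4
  linarith

end InnerProductSpace

theorem two_inner_cbs {X : Type*} [NormedAddCommGroup X]
    [InnerProductSpace ℂ X] (x y z : X) :
    ‖⟪y, x⟫_ℂ * (‖z‖ : ℂ) ^ 2 - ⟪z, x⟫_ℂ * ⟪y, z⟫_ℂ‖ ^ 2 ≤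
      (‖x‖ ^ 2 * ‖z‖ ^ 2 - ‖⟪z, x⟫_ℂ‖ ^ 2) *
        (‖y‖ ^ 2 * ‖z‖ ^ 2 - ‖⟪z, y⟫_ℂ‖ ^ 2) := by
  exact InnerProductSpace.norm_twoInner_sq_le ℂ x y z
end

section
/- Let (Ω, Σ, μ) be a measure space, ρ : Ω → (0,∞) measurable, and f, g, h : Ω → ℝ measurable with h(x) ≠ 0 for μ-a.e. x, such that ρ·f², ρ·g², ρ·h², ρ·f·g, ρ·f·h, ρ·g·h are μ-integrable. If the pair (f/h, g/h) is synchronous, i.e. (f(x)/h(x) − f(y)/h(y))·(g(x)/h(x) − g(y)/h(y)) ≥ 0 for μ⊗μ-a.e. (x,y) ∈ Ω × Ω, then (∫ ρ f g dμ)·(∫ ρ h² dμ) − (∫ ρ f h dμ)·(∫ ρ g h dμ) ≥ 0. -/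
/-! Chebyshev's argument: the kernel
`ρ x ρ y (h x h y)² (f x/h x - f y/h y)(g x/h x - g y/h y)` is a.e. nonnegative on `Ω × Ω`,
and after expanding it integrates to twice the Gram expression. -/

open MeasureTheory

section

variable {α β L : Type*} [MeasurableSpace α] [MeasurableSpace β] [RCLike L]
  {μ : Measure α} {ν : Measure β} [SFinite μ] [SFinite ν]

theorem integral_prod_mul_sub_mul {a c : α → L} {b d : β → L}
    (ha : Integrable a μ) (hb : Integrable b ν) (hc : Integrable c μ) (hd : Integrable d ν) :
    ∫ z, (a z.1 * b z.2 - c z.1 * d z.2) ∂μ.prod ν =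
      (∫ x, a x ∂μ) * (∫ y, b y ∂ν) - (∫ x, c x ∂μ) * (∫ y, d y ∂ν) := by
  rw [integral_sub (ha.mul_prod hb) (hc.mul_prod hd), integral_prod_mul, integral_prod_mul]

end

theorem cross_terms_nonneg_of_synchronous {K : Type*} [Field K] [LinearOrder K]
    [IsStrictOrderedRing K] {r s f₁ f₂ g₁ g₂ h₁ h₂ : K} (hr : 0 ≤ r) (hs : 0 ≤ s)
    (h₁0 : h₁ ≠ 0) (h₂0 : h₂ ≠ 0) (hsync : 0 ≤ (f₁ / h₁ - f₂ / h₂) * (g₁ / h₁ - g₂ / h₂)) :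
    0 ≤ (r * f₁ * g₁) * (s * h₂ ^ 2) - (r * f₁ * h₁) * (s * g₂ * h₂) +
      ((r * h₁ ^ 2) * (s * f₂ * g₂) - (r * g₁ * h₁) * (s * f₂ * h₂)) := by
  have key : (r * f₁ * g₁) * (s * h₂ ^ 2) - (r * f₁ * h₁) * (s * g₂ * h₂) +
      ((r * h₁ ^ 2) * (s * f₂ * g₂) - (r * g₁ * h₁) * (s * f₂ * h₂)) =
      r * s * (h₁ * h₂) ^ 2 * ((f₁ / h₁ - f₂ / h₂) * (g₁ / h₁ - g₂ / h₂)) := by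
    field_simp
    ring
  rw [key]
  positivity

theorem gram_nonneg_of_synchronous_general {Ω : Type*} [MeasurableSpace Ω]
    (μ : Measure Ω) [SigmaFinite μ] (ρ f g h : Ω → ℝ)
    (hρpos : ∀ x, 0 < ρ x)
    (hne : ∀ᵐ x ∂μ, h x ≠ 0)
    (hh2 : Integrable (fun x => ρ x * h x ^ 2) μ)
    (hfg : Integrable (fun x => ρ x * f x * g x) μ)
    (hfh : Integrable (fun x => ρ x * f x * h x) μ)
    (hgh : Integrable (fun x => ρ x * g x * h x) μ)
    (hsync : ∀ᵐ p ∂(μ.prod μ),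
      0 ≤ (f p.1 / h p.1 - f p.2 / h p.2) * (g p.1 / h p.1 - g p.2 / h p.2)) :
    0 ≤ (∫ x, ρ x * f x * g x ∂μ) * (∫ x, ρ x * h x ^ 2 ∂μ) -
        (∫ x, ρ x * f x * h x ∂μ) * (∫ x, ρ x * g x * h x ∂μ) := by
  have hne₁ : ∀ᵐ p ∂μ.prod μ, h p.1 ≠ 0 := Measure.quasiMeasurePreserving_fst.ae hne
  have hne₂ : ∀ᵐ p ∂μ.prod μ, h p.2 ≠ 0 := Measure.quasiMeasurePreserving_snd.ae hne
  have hkernel : 0 ≤ ∫ p,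
      ((ρ p.1 * f p.1 * g p.1) * (ρ p.2 * h p.2 ^ 2) -
          (ρ p.1 * f p.1 * h p.1) * (ρ p.2 * g p.2 * h p.2)) +
        ((ρ p.1 * h p.1 ^ 2) * (ρ p.2 * f p.2 * g p.2) -
          (ρ p.1 * g p.1 * h p.1) * (ρ p.2 * f p.2 * h p.2)) ∂μ.prod μ := by
    refine integral_nonneg_of_ae ?_
    filter_upwards [hne₁, hne₂, hsync] with p h₁ h₂ hp
    exact cross_terms_nonneg_of_synchronous (hρpos p.1).le (hρpos p.2).le h₁ h₂ hp
  rw [integral_add (f := fun p => _ - _) (g := fun p => _ - _)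
      ((hfg.mul_prod hh2).sub (hfh.mul_prod hgh)) ((hh2.mul_prod hfg).sub (hgh.mul_prod hfh)),
    integral_prod_mul_sub_mul hfg hh2 hfh hgh,
    integral_prod_mul_sub_mul hh2 hfg hgh hfh] at hkernel
  linarith

theorem gram_nonneg_of_synchronous {Ω : Type*} [MeasurableSpace Ω]
    (μ : Measure Ω) [SigmaFinite μ] (ρ f g h : Ω → ℝ)
    (hρm : Measurable ρ) (hρpos : ∀ x, 0 < ρ x)
    (hfm : Measurable f) (hgm : Measurable g) (hhm : Measurable h)
    (hne : ∀ᵐ x ∂μ, h x ≠ 0)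
    (hf2 : Integrable (fun x => ρ x * f x ^ 2) μ)
    (hg2 : Integrable (fun x => ρ x * g x ^ 2) μ)
    (hh2 : Integrable (fun x => ρ x * h x ^ 2) μ)
    (hfg : Integrable (fun x => ρ x * f x * g x) μ)
    (hfh : Integrable (fun x => ρ x * f x * h x) μ)
    (hgh : Integrable (fun x => ρ x * g x * h x) μ)
    (hsync : ∀ᵐ p ∂(μ.prod μ),
      0 ≤ (f p.1 / h p.1 - f p.2 / h p.2) * (g p.1 / h p.1 - g p.2 / h p.2)) :
    0 ≤ (∫ x, ρ x * f x * g x ∂μ) * (∫ x, ρ x * h x ^ 2 ∂μ) -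
        (∫ x, ρ x * f x * h x ∂μ) * (∫ x, ρ x * g x * h x ∂μ) :=
  gram_nonneg_of_synchronous_general μ ρ f g h hρpos hne hh2 hfg hfh hgh hsync
end

section
/- Let (Ω, Σ, μ) be a measure space, ρ : Ω → (0,∞) measurable, and f, g, h : Ω → ℝ with all weighted products ρf², ρg², ρh², ρfg, ρfh, ρgh integrable, h ≠ 0 a.e. Let 0 < m < M and suppose the functions M·(g/h) − f/h and f/h − m·(g/h) are synchronous. Writing G(u,v) := (∫ρ u v dμ)·(∫ρ h² dμ) − (∫ρ u h dμ)·(∫ρ v h dμ) for the Gram-type determinant, one has 0 ≤ G(f,f)·G(g,g) − G(f,g)² ≤ (1/4)·(M − m)²·G(g,g)². -/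
/-!
G(u,v) = ½ ∬ ρ(x) ρ(y) (u(x)h(y) − u(y)h(x)) (v(x)h(y) − v(y)h(x)) dμ(x) dμ(y), so G is a
positive semidefinite bilinear form and satisfies the Cauchy–Schwarz inequality; this gives the
lower bound. Dividing the integrand by h(x)² h(y)² turns it into
((u/h)(x) − (u/h)(y)) ((v/h)(x) − (v/h)(y)), so G(Mg − f, f − mg) ≥ 0 when M g/h − f/h and
f/h − m g/h are synchronous. Expanded by bilinearity this reads
G(f,f) + mM G(g,g) ≤ (M+m) G(f,g), and completing the square in G(f,g) gives the upper bound.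
-/

open MeasureTheory

/-- The Gram-type determinant G(u,v) = (∫ρuv)(∫ρh²) − (∫ρuh)(∫ρvh). -/
noncomputable def gramDet {Ω : Type*} [MeasurableSpace Ω] (μ : Measure Ω)
    (ρ h u v : Ω → ℝ) : ℝ :=
  (∫ x, ρ x * u x * v x ∂μ) * (∫ x, ρ x * h x ^ 2 ∂μ) -
    (∫ x, ρ x * u x * h x ∂μ) * (∫ x, ρ x * v x * h x ∂μ)

theorem sq_integral_mul_le {α : Type*} [MeasurableSpace α] {ν : Measure α} {w U V : α → ℝ}
    (hw : 0 ≤ᵐ[ν] w) (hUU : Integrable (fun z => w z * U z * U z) ν)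
    (hVV : Integrable (fun z => w z * V z * V z) ν)
    (hUV : Integrable (fun z => w z * U z * V z) ν) :
    (∫ z, w z * U z * V z ∂ν) ^ 2 ≤
      (∫ z, w z * U z * U z ∂ν) * ∫ z, w z * V z * V z ∂ν := by
  have hquad : ∀ t : ℝ, 0 ≤ (∫ z, w z * V z * V z ∂ν) * (t * t) +
      2 * (∫ z, w z * U z * V z ∂ν) * t + ∫ z, w z * U z * U z ∂ν := by
    intro t
    calc (0 : ℝ) ≤ ∫ z, w z * (U z + t * V z) ^ 2 ∂ν :=
          integral_nonneg_of_ae (hw.mono fun z hz => mul_nonneg hz (sq_nonneg _))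
      _ = ∫ z, ((t * t) * (w z * V z * V z) + (2 * t) * (w z * U z * V z) +
            w z * U z * U z) ∂ν := by
          congr 1; ext z; ring
      _ = _ := by
          rw [integral_add (by fun_prop) hUU, integral_add (by fun_prop) (by fun_prop),
            integral_const_mul, integral_const_mul]
          ring
  have hdiscrim := discrim_le_zero hquad
  rw [discrim] at hdiscrim
  nlinarith

theorem ae_prod_fst_and_snd {Ω : Type*} [MeasurableSpace Ω] {μ : Measure Ω}
    [SFinite μ] {P : Ω → Prop} (hP : ∀ᵐ x ∂μ, P x) : ∀ᵐ z ∂μ.prod μ, P z.1 ∧ P z.2 :=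
  (Measure.quasiMeasurePreserving_fst.ae hP).and (Measure.quasiMeasurePreserving_snd.ae hP)

section Gram

variable {Ω : Type*} {ρ h u v : Ω → ℝ}

def gramKernel (h u : Ω → ℝ) (z : Ω × Ω) : ℝ := u z.1 * h z.2 - u z.2 * h z.1

theorem mul_gramKernel_mul_gramKernel (ρ h u v : Ω → ℝ) :
    (fun z : Ω × Ω => ρ z.1 * ρ z.2 * gramKernel h u z * gramKernel h v z) = fun z =>
      (ρ z.1 * u z.1 * v z.1) * (ρ z.2 * h z.2 ^ 2) +
        (ρ z.1 * h z.1 ^ 2) * (ρ z.2 * u z.2 * v z.2) -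
        (ρ z.1 * u z.1 * h z.1) * (ρ z.2 * v z.2 * h z.2) -
        (ρ z.1 * v z.1 * h z.1) * (ρ z.2 * u z.2 * h z.2) := by
  ext z; simp only [gramKernel]; ring

variable [MeasurableSpace Ω] {μ : Measure Ω}

theorem integrable_gramKernel (huv : Integrable (fun x => ρ x * u x * v x) μ)
    (huh : Integrable (fun x => ρ x * u x * h x) μ) (hvh : Integrable (fun x => ρ x * v x * h x) μ)
    (hh : Integrable (fun x => ρ x * h x ^ 2) μ) :
    Integrable (fun z => ρ z.1 * ρ z.2 * gramKernel h u z * gramKernel h v z) (μ.prod μ) := by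
  rw [mul_gramKernel_mul_gramKernel]
  exact (((huv.mul_prod hh).add (hh.mul_prod huv)).sub (huh.mul_prod hvh)).sub (hvh.mul_prod huh)

theorem integral_gramKernel [SFinite μ] (huv : Integrable (fun x => ρ x * u x * v x) μ)
    (huh : Integrable (fun x => ρ x * u x * h x) μ) (hvh : Integrable (fun x => ρ x * v x * h x) μ)
    (hh : Integrable (fun x => ρ x * h x ^ 2) μ) :
    ∫ z, ρ z.1 * ρ z.2 * gramKernel h u z * gramKernel h v z ∂μ.prod μ =
      2 * gramDet μ ρ h u v := by
  have h₁ := huv.mul_prod hh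
  have h₂ := hh.mul_prod huv
  have h₃ := huh.mul_prod hvh
  have h₄ := hvh.mul_prod huh
  rw [mul_gramKernel_mul_gramKernel, integral_sub (by fun_prop) h₄, integral_sub (by fun_prop) h₃,
    integral_add h₁ h₂, integral_prod_mul (fun x => ρ x * u x * v x) (fun x => ρ x * h x ^ 2),
    integral_prod_mul (fun x => ρ x * h x ^ 2) (fun x => ρ x * u x * v x),
    integral_prod_mul (fun x => ρ x * u x * h x) (fun x => ρ x * v x * h x),
    integral_prod_mul (fun x => ρ x * v x * h x) (fun x => ρ x * u x * h x), gramDet]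
  ring

theorem gramDet_nonneg_of_ae_nonneg [SFinite μ] (huv : Integrable (fun x => ρ x * u x * v x) μ)
    (huh : Integrable (fun x => ρ x * u x * h x) μ) (hvh : Integrable (fun x => ρ x * v x * h x) μ)
    (hh : Integrable (fun x => ρ x * h x ^ 2) μ)
    (hpos : ∀ᵐ z ∂μ.prod μ, 0 ≤ ρ z.1 * ρ z.2 * gramKernel h u z * gramKernel h v z) :
    0 ≤ gramDet μ ρ h u v := by
  have := integral_nonneg_of_ae hpos
  rw [integral_gramKernel huv huh hvh hh] at this
  linarith

theorem gramDet_self_nonneg [SFinite μ] (hρ : 0 ≤ᵐ[μ] ρ)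
    (huu : Integrable (fun x => ρ x * u x * u x) μ)
    (huh : Integrable (fun x => ρ x * u x * h x) μ) (hh : Integrable (fun x => ρ x * h x ^ 2) μ) :
    0 ≤ gramDet μ ρ h u u :=
  gramDet_nonneg_of_ae_nonneg huu huh huh hh <| (ae_prod_fst_and_snd hρ).mono fun z hz => by
    rw [mul_assoc]; exact mul_nonneg (mul_nonneg hz.1 hz.2) (mul_self_nonneg _)

theorem sq_gramDet_le [SFinite μ] (hρ : 0 ≤ᵐ[μ] ρ) (huu : Integrable (fun x => ρ x * u x * u x) μ)
    (hvv : Integrable (fun x => ρ x * v x * v x) μ) (huv : Integrable (fun x => ρ x * u x * v x) μ)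
    (huh : Integrable (fun x => ρ x * u x * h x) μ) (hvh : Integrable (fun x => ρ x * v x * h x) μ)
    (hh : Integrable (fun x => ρ x * h x ^ 2) μ) :
    gramDet μ ρ h u v ^ 2 ≤ gramDet μ ρ h u u * gramDet μ ρ h v v := by
  have hw : 0 ≤ᵐ[μ.prod μ] fun z => ρ z.1 * ρ z.2 :=
    (ae_prod_fst_and_snd hρ).mono fun z hz => mul_nonneg hz.1 hz.2
  have hcs := sq_integral_mul_le hw (integrable_gramKernel huu huh huh hh)
    (integrable_gramKernel hvv hvh hvh hh) (integrable_gramKernel huv huh hvh hh)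
  rw [integral_gramKernel huu huh huh hh, integral_gramKernel hvv hvh hvh hh,
    integral_gramKernel huv huh hvh hh] at hcs
  nlinarith

def Synchronous (μ : Measure Ω) (p q : Ω → ℝ) : Prop :=
  ∀ᵐ z ∂μ.prod μ, 0 ≤ (p z.1 - p z.2) * (q z.1 - q z.2)

theorem gramDet_nonneg_of_synchronous [SFinite μ] (hρ : 0 ≤ᵐ[μ] ρ) (hne : ∀ᵐ x ∂μ, h x ≠ 0)
    (huv : Integrable (fun x => ρ x * u x * v x) μ)
    (huh : Integrable (fun x => ρ x * u x * h x) μ) (hvh : Integrable (fun x => ρ x * v x * h x) μ)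
    (hh : Integrable (fun x => ρ x * h x ^ 2) μ)
    (hsync : Synchronous μ (fun x => u x / h x) (fun x => v x / h x)) :
    0 ≤ gramDet μ ρ h u v := by
  refine gramDet_nonneg_of_ae_nonneg huv huh hvh hh ?_
  filter_upwards [hsync, ae_prod_fst_and_snd (hρ.and hne)] with z hz ⟨⟨hρ₁, hh₁⟩, hρ₂, hh₂⟩
  calc 0 ≤ ρ z.1 * h z.1 ^ 2 * (ρ z.2 * h z.2 ^ 2) *
        ((u z.1 / h z.1 - u z.2 / h z.2) * (v z.1 / h z.1 - v z.2 / h z.2)) :=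
        mul_nonneg (mul_nonneg (mul_nonneg hρ₁ (sq_nonneg _)) (mul_nonneg hρ₂ (sq_nonneg _))) hz
    _ = _ := by simp only [gramKernel]; field_simp

theorem gramDet_add_mul_le_of_synchronous [SFinite μ] {f g : Ω → ℝ} {m M : ℝ} (hρ : 0 ≤ᵐ[μ] ρ)
    (hne : ∀ᵐ x ∂μ, h x ≠ 0) (hff : Integrable (fun x => ρ x * f x * f x) μ)
    (hgg : Integrable (fun x => ρ x * g x * g x) μ) (hfg : Integrable (fun x => ρ x * f x * g x) μ)
    (hfh : Integrable (fun x => ρ x * f x * h x) μ) (hgh : Integrable (fun x => ρ x * g x * h x) μ)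
    (hh : Integrable (fun x => ρ x * h x ^ 2) μ)
    (hsync : Synchronous μ (fun x => M * (g x / h x) - f x / h x)
      (fun x => f x / h x - m * (g x / h x))) :
    gramDet μ ρ h f f + m * M * gramDet μ ρ h g g ≤ (M + m) * gramDet μ ρ h f g := by
  have i₁ : Integrable (fun x => ρ x * (M * g x - f x) * (f x - m * g x)) μ :=
    (show Integrable (fun x => (M + m) * (ρ x * f x * g x) - ρ x * f x * f x -
      m * M * (ρ x * g x * g x)) μ by fun_prop).congr (ae_of_all _ fun x => by ring)
  have i₂ : Integrable (fun x => ρ x * (M * g x - f x) * h x) μ :=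
    (show Integrable (fun x => M * (ρ x * g x * h x) - ρ x * f x * h x) μ by fun_prop).congr
      (ae_of_all _ fun x => by ring)
  have i₃ : Integrable (fun x => ρ x * (f x - m * g x) * h x) μ :=
    (show Integrable (fun x => ρ x * f x * h x - m * (ρ x * g x * h x)) μ by fun_prop).congr
      (ae_of_all _ fun x => by ring)
  have e₁ : ∫ x, ρ x * (M * g x - f x) * (f x - m * g x) ∂μ = (M + m) * ∫ x, ρ x * f x * g x ∂μ -
      ∫ x, ρ x * f x * f x ∂μ - m * M * ∫ x, ρ x * g x * g x ∂μ := by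
    rw [← integral_const_mul, ← integral_const_mul, ← integral_sub (by fun_prop) hff,
      ← integral_sub (by fun_prop) (by fun_prop)]
    congr 1; ext x; ring
  have e₂ : ∫ x, ρ x * (M * g x - f x) * h x ∂μ =
      M * ∫ x, ρ x * g x * h x ∂μ - ∫ x, ρ x * f x * h x ∂μ := by
    rw [← integral_const_mul, ← integral_sub (by fun_prop) hfh]
    congr 1; ext x; ring
  have e₃ : ∫ x, ρ x * (f x - m * g x) * h x ∂μ =
      ∫ x, ρ x * f x * h x ∂μ - m * ∫ x, ρ x * g x * h x ∂μ := by
    rw [← integral_const_mul, ← integral_sub hfh (by fun_prop)]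
    congr 1; ext x; ring
  have hnonneg := gramDet_nonneg_of_synchronous hρ hne i₁ i₂ i₃ hh <| by
    simpa only [Synchronous, sub_div, mul_div_assoc] using hsync
  rw [gramDet, e₁, e₂, e₃] at hnonneg
  rw [gramDet, gramDet, gramDet]
  linear_combination hnonneg

end Gram

theorem mul_sub_sq_le_of_add_mul_le {P Q R m M : ℝ} (hQ : 0 ≤ Q)
    (h : P + m * M * Q ≤ (M + m) * R) : P * Q - R ^ 2 ≤ 1 / 4 * (M - m) ^ 2 * Q ^ 2 := by
  nlinarith [mul_le_mul_of_nonneg_right h hQ, sq_nonneg (2 * R - (M + m) * Q)]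

theorem gram_reverse_cbs_general {Ω : Type*} [MeasurableSpace Ω]
    (μ : Measure Ω) [SigmaFinite μ] (ρ f g h : Ω → ℝ) (m M : ℝ)
    (hρpos : ∀ x, 0 < ρ x)
    (hne : ∀ᵐ x ∂μ, h x ≠ 0)
    (hf2 : Integrable (fun x => ρ x * f x ^ 2) μ)
    (hg2 : Integrable (fun x => ρ x * g x ^ 2) μ)
    (hh2 : Integrable (fun x => ρ x * h x ^ 2) μ)
    (hfg : Integrable (fun x => ρ x * f x * g x) μ)
    (hfh : Integrable (fun x => ρ x * f x * h x) μ)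
    (hgh : Integrable (fun x => ρ x * g x * h x) μ)
    (hsync : ∀ᵐ p ∂(μ.prod μ),
      0 ≤ ((M * (g p.1 / h p.1) - f p.1 / h p.1) -
            (M * (g p.2 / h p.2) - f p.2 / h p.2)) *
          ((f p.1 / h p.1 - m * (g p.1 / h p.1)) -
            (f p.2 / h p.2 - m * (g p.2 / h p.2)))) :
    0 ≤ gramDet μ ρ h f f * gramDet μ ρ h g g - gramDet μ ρ h f g ^ 2 ∧
      gramDet μ ρ h f f * gramDet μ ρ h g g - gramDet μ ρ h f g ^ 2 ≤
        (1 / 4) * (M - m) ^ 2 * gramDet μ ρ h g g ^ 2 := by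
  have hρ : 0 ≤ᵐ[μ] ρ := ae_of_all _ fun x => (hρpos x).le
  have hff : Integrable (fun x => ρ x * f x * f x) μ := hf2.congr (ae_of_all _ fun x => by ring)
  have hgg : Integrable (fun x => ρ x * g x * g x) μ := hg2.congr (ae_of_all _ fun x => by ring)
  have hcs := sq_gramDet_le hρ hff hgg hfg hfh hgh hh2
  have hgg_nonneg := gramDet_self_nonneg hρ hgg hgh hh2
  have hreverse := gramDet_add_mul_le_of_synchronous hρ hne hff hgg hfg hfh hgh hh2 hsync
  exact ⟨sub_nonneg.2 hcs, mul_sub_sq_le_of_add_mul_le hgg_nonneg hreverse⟩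

theorem gram_reverse_cbs {Ω : Type*} [MeasurableSpace Ω]
    (μ : Measure Ω) [SigmaFinite μ] (ρ f g h : Ω → ℝ) (m M : ℝ)
    (hm : 0 < m) (hmM : m < M)
    (hρm : Measurable ρ) (hρpos : ∀ x, 0 < ρ x)
    (hfm : Measurable f) (hgm : Measurable g) (hhm : Measurable h)
    (hne : ∀ᵐ x ∂μ, h x ≠ 0)
    (hf2 : Integrable (fun x => ρ x * f x ^ 2) μ)
    (hg2 : Integrable (fun x => ρ x * g x ^ 2) μ)
    (hh2 : Integrable (fun x => ρ x * h x ^ 2) μ)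
    (hfg : Integrable (fun x => ρ x * f x * g x) μ)
    (hfh : Integrable (fun x => ρ x * f x * h x) μ)
    (hgh : Integrable (fun x => ρ x * g x * h x) μ)
    (hsync : ∀ᵐ p ∂(μ.prod μ),
      0 ≤ ((M * (g p.1 / h p.1) - f p.1 / h p.1) -
            (M * (g p.2 / h p.2) - f p.2 / h p.2)) *
          ((f p.1 / h p.1 - m * (g p.1 / h p.1)) -
            (f p.2 / h p.2 - m * (g p.2 / h p.2)))) :
    0 ≤ gramDet μ ρ h f f * gramDet μ ρ h g g - gramDet μ ρ h f g ^ 2 ∧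
      gramDet μ ρ h f f * gramDet μ ρ h g g - gramDet μ ρ h f g ^ 2 ≤
        (1 / 4) * (M - m) ^ 2 * gramDet μ ρ h g g ^ 2 :=
  gram_reverse_cbs_general μ ρ f g h m M hρpos hne hf2 hg2 hh2 hfg hfh hgh hsync
end

section
/- Let (Ω, Σ, μ) be a measure space, ρ : Ω → (0,∞) measurable, and f, g, h : Ω → ℝ with all weighted products ρf², ρg², ρh², ρfg, ρfh, ρgh integrable, h ≠ 0 a.e. Let 0 < m < M and suppose M·(g/h) − f/h and f/h − m·(g/h) are synchronous. With G(u,v) := (∫ρ u v)·(∫ρ h²) − (∫ρ u h)·(∫ρ v h), one has 0 ≤ √(G(f,f))·√(G(g,g)) − |G(f,g)| ≤ (1/4)·((M − m)²/(M + m))·G(g,g). -/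
open MeasureTheory

section Aux

lemma int_combo3 {α : Type*} [MeasurableSpace α] {ν : Measure α} {F G H : α → ℝ}
    (p q r : ℝ) (iF : Integrable F ν) (iG : Integrable G ν) (iH : Integrable H ν) :
    ∫ z, (p * F z + q * G z + r * H z) ∂ν
      = p * (∫ z, F z ∂ν) + q * (∫ z, G z ∂ν) + r * (∫ z, H z ∂ν) := by
  have i1 : Integrable (fun z => p * F z) ν := iF.const_mul p
  have i2 : Integrable (fun z => q * G z) ν := iG.const_mul q
  have i3 : Integrable (fun z => r * H z) ν := iH.const_mul r
  have i12 : Integrable (fun z => p * F z + q * G z) ν := i1.add i2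
  rw [integral_add i12 i3, integral_add i1 i2, integral_const_mul,
    integral_const_mul, integral_const_mul]

variable {Ω : Type*} [MeasurableSpace Ω] (μ : Measure Ω) [SigmaFinite μ]
  (ρ h u v : Ω → ℝ)

lemma gram_int (huv : Integrable (fun x => ρ x * u x * v x) μ)
    (hh2 : Integrable (fun x => ρ x * h x ^ 2) μ)
    (huh : Integrable (fun x => ρ x * u x * h x) μ)
    (hvh : Integrable (fun x => ρ x * v x * h x) μ) :
    Integrable (fun z : Ω × Ω =>
      ρ z.1 * ρ z.2 * (u z.1 * h z.2 - u z.2 * h z.1) *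
        (v z.1 * h z.2 - v z.2 * h z.1)) (μ.prod μ) := by
  have H := ((huv.mul_prod hh2).add (hh2.mul_prod huv)).sub
    ((huh.mul_prod hvh).add (hvh.mul_prod huh))
  exact H.congr (Filter.Eventually.of_forall fun z => by
    simp only [Pi.add_apply, Pi.sub_apply]; ring)

lemma gram_repr (huv : Integrable (fun x => ρ x * u x * v x) μ)
    (hh2 : Integrable (fun x => ρ x * h x ^ 2) μ)
    (huh : Integrable (fun x => ρ x * u x * h x) μ)
    (hvh : Integrable (fun x => ρ x * v x * h x) μ) :
    ∫ z : Ω × Ω, ρ z.1 * ρ z.2 * (u z.1 * h z.2 - u z.2 * h z.1) *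
        (v z.1 * h z.2 - v z.2 * h z.1) ∂(μ.prod μ) = 2 * gramDet μ ρ h u v := by
  have h1 := huv.mul_prod hh2
  have h2 := hh2.mul_prod huv
  have h3 := huh.mul_prod hvh
  have h4 := hvh.mul_prod huh
  have h12 : Integrable (fun z : Ω × Ω => (ρ z.1 * u z.1 * v z.1) * (ρ z.2 * h z.2 ^ 2) +
      (ρ z.1 * h z.1 ^ 2) * (ρ z.2 * u z.2 * v z.2)) (μ.prod μ) := h1.add h2
  have h34 : Integrable (fun z : Ω × Ω => (ρ z.1 * u z.1 * h z.1) * (ρ z.2 * v z.2 * h z.2) +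
      (ρ z.1 * v z.1 * h z.1) * (ρ z.2 * u z.2 * h z.2)) (μ.prod μ) := h3.add h4
  have key : (fun z : Ω × Ω =>
      ρ z.1 * ρ z.2 * (u z.1 * h z.2 - u z.2 * h z.1) *
        (v z.1 * h z.2 - v z.2 * h z.1))
      = fun z : Ω × Ω =>
        ((ρ z.1 * u z.1 * v z.1) * (ρ z.2 * h z.2 ^ 2) +
          (ρ z.1 * h z.1 ^ 2) * (ρ z.2 * u z.2 * v z.2)) -
        ((ρ z.1 * u z.1 * h z.1) * (ρ z.2 * v z.2 * h z.2) +
          (ρ z.1 * v z.1 * h z.1) * (ρ z.2 * u z.2 * h z.2)) := by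
    funext z; ring
  have e1 : ∫ z : Ω × Ω, (ρ z.1 * u z.1 * v z.1) * (ρ z.2 * h z.2 ^ 2) ∂(μ.prod μ)
      = (∫ x, ρ x * u x * v x ∂μ) * (∫ x, ρ x * h x ^ 2 ∂μ) :=
    integral_prod_mul (fun x => ρ x * u x * v x) (fun x => ρ x * h x ^ 2)
  have e2 : ∫ z : Ω × Ω, (ρ z.1 * h z.1 ^ 2) * (ρ z.2 * u z.2 * v z.2) ∂(μ.prod μ)
      = (∫ x, ρ x * h x ^ 2 ∂μ) * (∫ x, ρ x * u x * v x ∂μ) :=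
    integral_prod_mul (fun x => ρ x * h x ^ 2) (fun x => ρ x * u x * v x)
  have e3 : ∫ z : Ω × Ω, (ρ z.1 * u z.1 * h z.1) * (ρ z.2 * v z.2 * h z.2) ∂(μ.prod μ)
      = (∫ x, ρ x * u x * h x ∂μ) * (∫ x, ρ x * v x * h x ∂μ) :=
    integral_prod_mul (fun x => ρ x * u x * h x) (fun x => ρ x * v x * h x)
  have e4 : ∫ z : Ω × Ω, (ρ z.1 * v z.1 * h z.1) * (ρ z.2 * u z.2 * h z.2) ∂(μ.prod μ)
      = (∫ x, ρ x * v x * h x ∂μ) * (∫ x, ρ x * u x * h x ∂μ) :=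
    integral_prod_mul (fun x => ρ x * v x * h x) (fun x => ρ x * u x * h x)
  rw [key, integral_sub h12 h34, integral_add h1 h2, integral_add h3 h4,
    e1, e2, e3, e4]
  simp only [gramDet]
  ring

end Aux

theorem gram_reverse_cbs_sqrt {Ω : Type*} [MeasurableSpace Ω]
    (μ : Measure Ω) [SigmaFinite μ] (ρ f g h : Ω → ℝ) (m M : ℝ)
    (hm : 0 < m) (hmM : m < M)
    (hρm : Measurable ρ) (hρpos : ∀ x, 0 < ρ x)
    (hfm : Measurable f) (hgm : Measurable g) (hhm : Measurable h)
    (hne : ∀ᵐ x ∂μ, h x ≠ 0)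
    (hf2 : Integrable (fun x => ρ x * f x ^ 2) μ)
    (hg2 : Integrable (fun x => ρ x * g x ^ 2) μ)
    (hh2 : Integrable (fun x => ρ x * h x ^ 2) μ)
    (hfg : Integrable (fun x => ρ x * f x * g x) μ)
    (hfh : Integrable (fun x => ρ x * f x * h x) μ)
    (hgh : Integrable (fun x => ρ x * g x * h x) μ)
    (hsync : ∀ᵐ p ∂(μ.prod μ),
      0 ≤ ((M * (g p.1 / h p.1) - f p.1 / h p.1) -
            (M * (g p.2 / h p.2) - f p.2 / h p.2)) *
          ((f p.1 / h p.1 - m * (g p.1 / h p.1)) -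
            (f p.2 / h p.2 - m * (g p.2 / h p.2)))) :
    0 ≤ Real.sqrt (gramDet μ ρ h f f) * Real.sqrt (gramDet μ ρ h g g) -
        |gramDet μ ρ h f g| ∧
      Real.sqrt (gramDet μ ρ h f f) * Real.sqrt (gramDet μ ρ h g g) -
        |gramDet μ ρ h f g| ≤
        (1 / 4) * ((M - m) ^ 2 / (M + m)) * gramDet μ ρ h g g := by
  have hff : Integrable (fun x => ρ x * f x * f x) μ :=
    hf2.congr (Filter.Eventually.of_forall fun x => by ring)
  have hgg : Integrable (fun x => ρ x * g x * g x) μ :=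
    hg2.congr (Filter.Eventually.of_forall fun x => by ring)
  -- kernel functions on the product space
  set Af : Ω × Ω → ℝ := fun z =>
    ρ z.1 * ρ z.2 * (f z.1 * h z.2 - f z.2 * h z.1) * (f z.1 * h z.2 - f z.2 * h z.1)
    with hAf_def
  set Bf : Ω × Ω → ℝ := fun z =>
    ρ z.1 * ρ z.2 * (g z.1 * h z.2 - g z.2 * h z.1) * (g z.1 * h z.2 - g z.2 * h z.1)
    with hBf_def
  set Cf : Ω × Ω → ℝ := fun z =>
    ρ z.1 * ρ z.2 * (f z.1 * h z.2 - f z.2 * h z.1) * (g z.1 * h z.2 - g z.2 * h z.1)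
    with hCf_def
  have IA : Integrable Af (μ.prod μ) := gram_int μ ρ h f f hff hh2 hfh hfh
  have IB : Integrable Bf (μ.prod μ) := gram_int μ ρ h g g hgg hh2 hgh hgh
  have IC : Integrable Cf (μ.prod μ) := gram_int μ ρ h f g hfg hh2 hfh hgh
  have hA : ∫ z, Af z ∂(μ.prod μ) = 2 * gramDet μ ρ h f f :=
    gram_repr μ ρ h f f hff hh2 hfh hfh
  have hB : ∫ z, Bf z ∂(μ.prod μ) = 2 * gramDet μ ρ h g g :=
    gram_repr μ ρ h g g hgg hh2 hgh hgh
  have hC : ∫ z, Cf z ∂(μ.prod μ) = 2 * gramDet μ ρ h f g :=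
    gram_repr μ ρ h f g hfg hh2 hfh hgh
  have hAf_nonneg : ∀ z, 0 ≤ Af z := by
    intro z
    have hw : 0 ≤ ρ z.1 * ρ z.2 := le_of_lt (mul_pos (hρpos z.1) (hρpos z.2))
    show (0:ℝ) ≤ ρ z.1 * ρ z.2 * (f z.1 * h z.2 - f z.2 * h z.1) *
      (f z.1 * h z.2 - f z.2 * h z.1)
    nlinarith [sq_nonneg (f z.1 * h z.2 - f z.2 * h z.1)]
  have hBf_nonneg : ∀ z, 0 ≤ Bf z := by
    intro z
    have hw : 0 ≤ ρ z.1 * ρ z.2 := le_of_lt (mul_pos (hρpos z.1) (hρpos z.2))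
    show (0:ℝ) ≤ ρ z.1 * ρ z.2 * (g z.1 * h z.2 - g z.2 * h z.1) *
      (g z.1 * h z.2 - g z.2 * h z.1)
    nlinarith [sq_nonneg (g z.1 * h z.2 - g z.2 * h z.1)]
  -- abbreviations
  have ha : 0 ≤ gramDet μ ρ h f f := by
    have h0 : 0 ≤ (2 : ℝ) * gramDet μ ρ h f f := by
      rw [← hA]; exact integral_nonneg hAf_nonneg
    linarith
  have hb : 0 ≤ gramDet μ ρ h g g := by
    have h0 : 0 ≤ (2 : ℝ) * gramDet μ ρ h g g := by
      rw [← hB]; exact integral_nonneg hBf_nonneg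
    linarith
  -- Cauchy–Schwarz via the discriminant
  have hcs : gramDet μ ρ h f g ^ 2 ≤ gramDet μ ρ h f f * gramDet μ ρ h g g := by
    have hquad : ∀ t : ℝ,
        0 ≤ (2 * gramDet μ ρ h g g) * (t * t) +
          (2 * (2 * gramDet μ ρ h f g)) * t + 2 * gramDet μ ρ h f f := by
      intro t
      have hid := int_combo3 (t * t) (2 * t) 1 IB IC IA
      rw [hA, hB, hC] at hid
      have hpos : 0 ≤ ∫ z, (t * t * Bf z + 2 * t * Cf z + 1 * Af z) ∂(μ.prod μ) := by
        apply integral_nonneg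
        intro z
        show (0:ℝ) ≤ t * t * Bf z + 2 * t * Cf z + 1 * Af z
        have hw : 0 ≤ ρ z.1 * ρ z.2 := le_of_lt (mul_pos (hρpos z.1) (hρpos z.2))
        have hexp : t * t * Bf z + 2 * t * Cf z + 1 * Af z
            = ρ z.1 * ρ z.2 *
              ((f z.1 * h z.2 - f z.2 * h z.1) + t * (g z.1 * h z.2 - g z.2 * h z.1)) ^ 2 := by
          rw [hAf_def, hBf_def, hCf_def]; ring
        rw [hexp]
        positivity
      rw [hid] at hpos
      nlinarith [hpos]
    have hd := discrim_le_zero hquad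
    rw [discrim] at hd
    nlinarith [hd]
  -- synchronicity consequence
  have hne2 : ∀ᵐ z ∂(μ.prod μ), h z.1 ≠ 0 ∧ h z.2 ≠ 0 :=
    (Measure.quasiMeasurePreserving_fst.ae hne).and
      (Measure.quasiMeasurePreserving_snd.ae hne)
  have hkey : ∀ᵐ z ∂(μ.prod μ),
      0 ≤ (-1) * Af z + (-(m * M)) * Bf z + (M + m) * Cf z := by
    filter_upwards [hne2, hsync] with z hz hs
    obtain ⟨h1, h2⟩ := hz
    have hid : (-1) * Af z + (-(m * M)) * Bf z + (M + m) * Cf z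
        = (ρ z.1 * ρ z.2 * h z.1 ^ 2 * h z.2 ^ 2) *
          (((M * (g z.1 / h z.1) - f z.1 / h z.1) -
            (M * (g z.2 / h z.2) - f z.2 / h z.2)) *
          ((f z.1 / h z.1 - m * (g z.1 / h z.1)) -
            (f z.2 / h z.2 - m * (g z.2 / h z.2)))) := by
      rw [hAf_def, hBf_def, hCf_def]
      field_simp
      ring
    rw [hid]
    have hw : 0 ≤ ρ z.1 * ρ z.2 * h z.1 ^ 2 * h z.2 ^ 2 := by
      have := le_of_lt (mul_pos (hρpos z.1) (hρpos z.2))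
      positivity
    exact mul_nonneg hw hs
  have hsync2 : gramDet μ ρ h f f + m * M * gramDet μ ρ h g g
      ≤ (M + m) * gramDet μ ρ h f g := by
    have hid := int_combo3 (-1) (-(m * M)) (M + m) IA IB IC
    rw [hA, hB, hC] at hid
    have hpos : 0 ≤ ∫ z, ((-1) * Af z + (-(m * M)) * Bf z + (M + m) * Cf z)
        ∂(μ.prod μ) := integral_nonneg_of_ae hkey
    rw [hid] at hpos
    nlinarith [hpos]
  -- pure algebra from here on
  set a := gramDet μ ρ h f f
  set b := gramDet μ ρ h g g
  set c := gramDet μ ρ h f g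
  have hMm : 0 < M + m := by linarith
  set k : ℝ := (1 / 4) * ((M - m) ^ 2 / (M + m)) with hk_def
  have hk : k * (M + m) = (M - m) ^ 2 / 4 := by
    rw [hk_def]; field_simp
  have hk0 : 0 ≤ k := by positivity
  have hc0 : 0 ≤ c := by
    by_contra hcon
    push_neg at hcon
    nlinarith [mul_pos hMm (neg_pos.mpr hcon),
      mul_nonneg (mul_nonneg hm.le (hm.trans hmM).le) hb]
  have habs : |c| = c := abs_of_nonneg hc0
  have hsqrt_mul : Real.sqrt a * Real.sqrt b = Real.sqrt (a * b) :=
    (Real.sqrt_mul ha b).symm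
  constructor
  · rw [habs, hsqrt_mul, sub_nonneg]
    exact (Real.le_sqrt hc0 (mul_nonneg ha hb)).mpr hcs
  · rw [habs, hsqrt_mul]
    have hab_le : a * b ≤ (c + k * b) ^ 2 := by
      have h1 : a * b ≤ ((M + m) * c - m * M * b) * b :=
        mul_le_mul_of_nonneg_right (by linarith) hb
      nlinarith [sq_nonneg (c - ((M + m) / 2 - k) * b), sq_nonneg b]
    have hle : Real.sqrt (a * b) ≤ c + k * b := by
      calc Real.sqrt (a * b) ≤ Real.sqrt ((c + k * b) ^ 2) :=
            Real.sqrt_le_sqrt hab_le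
        _ = c + k * b := Real.sqrt_sq (by positivity)
    linarith
end

section
/- Let (Ω, Σ, μ) be a measure space, ρ : Ω → (0,∞) measurable, and f, g, h : Ω → ℝ with all weighted products integrable, h ≠ 0 a.e. Let 0 < m < M and suppose M·(g/h) − f/h and f/h − m·(g/h) are synchronous. With G(u,v) := (∫ρ u v)·(∫ρ h²) − (∫ρ u h)·(∫ρ v h), one has 0 ≤ √(G(f,f)) + √(G(g,g)) − √(G(f+g, f+g)) ≤ (1/2)·((M − m)/√(M + m))·√(G(g,g)). -/
open MeasureTheory

lemma cubic_aux (w : ℝ) (h0 : 0 < w) (h2 : w ≤ 2) : w*(4+w^2) ≤ 4*(w^2+1) - 2 := by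
  nlinarith [mul_nonneg (sq_nonneg w) (by linarith : (0:ℝ) ≤ 2 - w), sq_nonneg (w-1)]

lemma key_poly (m s t w : ℝ) (hm : 0 < m) (hw : 0 < w) (ht : 0 < t)
    (hd : 2*m < w^2) (hs1 : m*t ≤ s) (hs2 : s ≤ (w^2 - m)*t) :
    4*(((w^2-m)*t - s)*(s - m*t)) ≤ (w^2 - 2*m)*w*t*(2*s+t) := by
  rcases le_total w 2 with hw2 | hw2
  · have hc : (w^2-2*m)*(4+w^2) ≤ 4*w*(w^2+1) := by
      have h1 : w*(4+w^2) ≤ 4*(w^2+1) - 2 := cubic_aux w hw hw2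
      nlinarith [mul_pos hw hw]
    nlinarith [hc, sq_nonneg (4*s - 2*w^2*t + (w^2-2*m)*w*t), mul_pos ht ht,
      mul_pos (by linarith : (0:ℝ) < w^2 - 2*m) (mul_pos ht ht)]
  · have e1 : 0 ≤ (w^2-2*m)*w*t*(2*m*t+t) := by
      have h0 : (0:ℝ) ≤ 2*m*t + t := by nlinarith
      have h1 : (0:ℝ) ≤ (w^2-2*m)*w*t :=
        mul_nonneg (mul_nonneg (by linarith) hw.le) ht.le
      exact mul_nonneg h1 h0
    have e2 : 0 ≤ (w^2-2*m)*(w-2)*(t*(s-m*t)) :=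
      mul_nonneg (mul_nonneg (by linarith) (by linarith))
        (mul_nonneg ht.le (by linarith))
    nlinarith [e1, e2, sq_nonneg (s - m*t)]

lemma aux2 (s t C D m M w : ℝ) (hs : 0 ≤ s) (ht : 0 < t) (hD : 0 ≤ D)
    (hw : 0 < w) (hwsq : w^2 = M + m) (hm : 0 < m) (hM : m < M)
    (hD2 : D^2 = s^2 + t^2 + 2*C) (hCs : C ≤ s*t)
    (hq : s^2 + M*m*t^2 ≤ (M+m)*C) :
    s + t - D ≤ (1/2)*((M-m)/w)*t := by
  have hMdef : M = w^2 - m := by linarith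
  subst hMdef
  have hd : 2*m < w^2 := by linarith
  have hw2pos : (0:ℝ) < w^2 := by positivity
  have hMm : (0:ℝ) < w^2 - m := by linarith
  have hC0 : 0 ≤ C := by
    by_contra hc
    push_neg at hc
    have h1 : (w^2 - m + m) * C < 0 := mul_neg_of_pos_of_neg (by linarith) hc
    have h2 : 0 < (w^2-m)*m*t^2 := by positivity
    nlinarith [sq_nonneg s]
  have hDs : s ≤ D := by
    rcases le_or_gt s D with h | h
    · exact h
    · exfalso
      have := mul_self_lt_mul_self hD h
      nlinarith [sq_nonneg t]
  have hprod : 0 ≤ ((w^2 - m)*t - s)*(s - m*t) := by nlinarith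
  have hs1 : m*t ≤ s := by
    by_contra hcon
    push_neg at hcon
    have h1 : 0 < (w^2-m)*t - s := by nlinarith
    have h2 : s - m*t < 0 := by linarith
    have := mul_neg_of_pos_of_neg h1 h2
    linarith
  have hs2 : s ≤ (w^2-m)*t := by
    by_contra hcon
    push_neg at hcon
    have h1 : (w^2-m)*t - s < 0 := by linarith
    have h2 : 0 < s - m*t := by nlinarith
    have := mul_neg_of_neg_of_pos h1 h2
    linarith
  have key := key_poly m s t w hm hw ht hd hs1 hs2
  have hP : w^2*(s*t - C) ≤ ((w^2-m)*t - s)*(s - m*t) := by nlinarith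
  have hden : 0 < s + t + D := by linarith
  -- chain: 4*(s*t-C)*w * w ≤ d*t*(s+t+D) * w
  have hstep : (4*(s*t - C)*w) * w ≤ ((w^2-2*m)*t*(s+t+D)) * w := by
    have k1 : 4*(s*t - C)*w^2 ≤ 4*(((w^2-m)*t - s)*(s - m*t)) := by linarith [hP]
    have k2 : (w^2-2*m)*w*t*(2*s+t) ≤ (w^2-2*m)*w*t*(s+t+D) := by
      have hnn : (0:ℝ) ≤ (w^2-2*m)*w*t :=
        mul_nonneg (mul_nonneg (by linarith) hw.le) ht.le
      nlinarith [mul_nonneg hnn (by linarith : (0:ℝ) ≤ D - s)]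
    nlinarith [k1, key, k2]
  have hstep2 : 4*(s*t - C)*w ≤ (w^2-2*m)*t*(s+t+D) :=
    le_of_mul_le_mul_right hstep hw
  have lhs_eq : (s + t - D) * (2*w) * (s+t+D) = 4*(s*t - C)*w := by
    linear_combination (-2*w) * hD2
  have h9 : (s + t - D) * (2*w) ≤ (w^2-2*m)*t :=
    le_of_mul_le_mul_right (by rw [lhs_eq]; linarith [hstep2]) hden
  have hrhs : (1/2)*((w^2 - m - m)/w)*t = ((w^2-2*m)*t) / (2*w) := by
    field_simp
    ring_nf
  rw [hrhs, le_div_iff₀ (by linarith : (0:ℝ) < 2*w)]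
  linarith [h9]

lemma aux1 (A B C : ℝ) (hA : 0 ≤ A) (hB : 0 ≤ B) (hC0 : 0 ≤ C) (hCS : C^2 ≤ A*B) :
    Real.sqrt (A+B+2*C) ≤ Real.sqrt A + Real.sqrt B := by
  have h1 : C ≤ Real.sqrt A * Real.sqrt B := by
    rw [show C = Real.sqrt (C^2) from (Real.sqrt_sq hC0).symm, ← Real.sqrt_mul hA]
    exact Real.sqrt_le_sqrt hCS
  have h2 : A + B + 2*C ≤ (Real.sqrt A + Real.sqrt B)^2 := by
    have e1 := Real.sq_sqrt hA
    have e2 := Real.sq_sqrt hB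
    nlinarith
  calc Real.sqrt (A+B+2*C) ≤ Real.sqrt ((Real.sqrt A + Real.sqrt B)^2) :=
        Real.sqrt_le_sqrt h2
    _ = Real.sqrt A + Real.sqrt B := Real.sqrt_sq (by positivity)


lemma gram_nonneg' {Ω : Type*} [MeasurableSpace Ω] (μ : Measure Ω) [SigmaFinite μ]
    (ρ h u : Ω → ℝ) (hρpos : ∀ x, 0 < ρ x)
    (hu2 : Integrable (fun x => ρ x * u x ^ 2) μ)
    (hh2 : Integrable (fun x => ρ x * h x ^ 2) μ)
    (huh : Integrable (fun x => ρ x * u x * h x) μ) :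
    0 ≤ (∫ x, ρ x * u x * u x ∂μ) * (∫ x, ρ x * h x ^ 2 ∂μ) -
        (∫ x, ρ x * u x * h x ∂μ) * (∫ x, ρ x * u x * h x ∂μ) := by
  have huu : Integrable (fun x => ρ x * u x * u x) μ :=
    hu2.congr (Filter.Eventually.of_forall fun x => by ring)
  have i1 : Integrable (fun p : Ω × Ω => (ρ p.1 * u p.1 * u p.1) * (ρ p.2 * h p.2 ^ 2))
      (μ.prod μ) := huu.mul_prod hh2
  have i2 : Integrable (fun p : Ω × Ω => (ρ p.1 * h p.1 ^ 2) * (ρ p.2 * u p.2 * u p.2))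
      (μ.prod μ) := hh2.mul_prod huu
  have i3 : Integrable (fun p : Ω × Ω =>
      (ρ p.1 * u p.1 * h p.1) * (ρ p.2 * u p.2 * h p.2)) (μ.prod μ) := huh.mul_prod huh
  have i12 : Integrable (fun p : Ω × Ω => (ρ p.1 * u p.1 * u p.1) * (ρ p.2 * h p.2 ^ 2)
      + (ρ p.1 * h p.1 ^ 2) * (ρ p.2 * u p.2 * u p.2)) (μ.prod μ) := i1.add i2
  have i3' : Integrable (fun p : Ω × Ω =>
      2 * ((ρ p.1 * u p.1 * h p.1) * (ρ p.2 * u p.2 * h p.2))) (μ.prod μ) := i3.const_mul 2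
  have key : 0 ≤ ∫ p : Ω × Ω, ((ρ p.1 * u p.1 * u p.1) * (ρ p.2 * h p.2 ^ 2)
      + (ρ p.1 * h p.1 ^ 2) * (ρ p.2 * u p.2 * u p.2)
      - 2 * ((ρ p.1 * u p.1 * h p.1) * (ρ p.2 * u p.2 * h p.2))) ∂(μ.prod μ) := by
    apply integral_nonneg
    intro p
    simp only [Pi.zero_apply]
    have h1 := (hρpos p.1).le
    have h2 := (hρpos p.2).le
    nlinarith [mul_nonneg (mul_nonneg h1 h2) (sq_nonneg (u p.1 * h p.2 - h p.1 * u p.2))]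
  rw [integral_sub i12 i3', integral_add i1 i2, integral_const_mul,
    integral_prod_mul (fun x => ρ x * u x * u x) (fun x => ρ x * h x ^ 2),
    integral_prod_mul (fun x => ρ x * h x ^ 2) (fun x => ρ x * u x * u x),
    integral_prod_mul (fun x => ρ x * u x * h x) (fun x => ρ x * u x * h x)] at key
  linarith [key]

lemma sync_gram {Ω : Type*} [MeasurableSpace Ω] (μ : Measure Ω) [SigmaFinite μ]
    (ρ h a b : Ω → ℝ)
    (hab : Integrable (fun x => ρ x * (a x * b x)) μ)
    (hah : Integrable (fun x => ρ x * (a x * h x)) μ)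
    (hbh : Integrable (fun x => ρ x * (b x * h x)) μ)
    (hh2 : Integrable (fun x => ρ x * h x ^ 2) μ)
    (hT : ∀ᵐ p ∂(μ.prod μ), 0 ≤ ρ p.1 * ρ p.2 *
        ((a p.1 * h p.2 - a p.2 * h p.1) * (b p.1 * h p.2 - b p.2 * h p.1))) :
    0 ≤ (∫ x, ρ x * (a x * b x) ∂μ) * (∫ x, ρ x * h x ^ 2 ∂μ) -
        (∫ x, ρ x * (a x * h x) ∂μ) * (∫ x, ρ x * (b x * h x) ∂μ) := by
  have i1 := hab.mul_prod hh2
  have i4 := hh2.mul_prod hab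
  have i2 := hah.mul_prod hbh
  have i3 := hbh.mul_prod hah
  have i14 : Integrable (fun p : Ω × Ω => (ρ p.1 * (a p.1 * b p.1)) * (ρ p.2 * h p.2 ^ 2)
      + (ρ p.1 * h p.1 ^ 2) * (ρ p.2 * (a p.2 * b p.2))) (μ.prod μ) := i1.add i4
  have i23 : Integrable (fun p : Ω × Ω => (ρ p.1 * (a p.1 * h p.1)) * (ρ p.2 * (b p.2 * h p.2))
      + (ρ p.1 * (b p.1 * h p.1)) * (ρ p.2 * (a p.2 * h p.2))) (μ.prod μ) := i2.add i3
  have key : 0 ≤ ∫ p : Ω × Ω, ((ρ p.1 * (a p.1 * b p.1)) * (ρ p.2 * h p.2 ^ 2)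
      + (ρ p.1 * h p.1 ^ 2) * (ρ p.2 * (a p.2 * b p.2))
      - ((ρ p.1 * (a p.1 * h p.1)) * (ρ p.2 * (b p.2 * h p.2))
        + (ρ p.1 * (b p.1 * h p.1)) * (ρ p.2 * (a p.2 * h p.2)))) ∂(μ.prod μ) := by
    refine integral_nonneg_of_ae ?_
    filter_upwards [hT] with p hp
    simp only [Pi.zero_apply]
    linarith [hp]
  rw [integral_sub i14 i23, integral_add i1 i4, integral_add i2 i3,
    integral_prod_mul (fun x => ρ x * (a x * b x)) (fun x => ρ x * h x ^ 2),
    integral_prod_mul (fun x => ρ x * h x ^ 2) (fun x => ρ x * (a x * b x)),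
    integral_prod_mul (fun x => ρ x * (a x * h x)) (fun x => ρ x * (b x * h x)),
    integral_prod_mul (fun x => ρ x * (b x * h x)) (fun x => ρ x * (a x * h x))] at key
  linarith [key]

section helpers2


variable {Ω : Type*} [MeasurableSpace Ω] {μ : Measure Ω}

lemma integral_comb2 (μ : Measure Ω) (c₁ c₂ : ℝ) (φ₁ φ₂ : Ω → ℝ)
    (h₁ : Integrable φ₁ μ) (h₂ : Integrable φ₂ μ) :
    ∫ x, (c₁ * φ₁ x + c₂ * φ₂ x) ∂μ
      = c₁ * ∫ x, φ₁ x ∂μ + c₂ * ∫ x, φ₂ x ∂μ := by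
  have k₁ : Integrable (fun x => c₁ * φ₁ x) μ := h₁.const_mul _
  have k₂ : Integrable (fun x => c₂ * φ₂ x) μ := h₂.const_mul _
  rw [integral_add k₁ k₂, integral_const_mul, integral_const_mul]

lemma integral_comb3 (μ : Measure Ω) (c₁ c₂ c₃ : ℝ) (φ₁ φ₂ φ₃ : Ω → ℝ)
    (h₁ : Integrable φ₁ μ) (h₂ : Integrable φ₂ μ) (h₃ : Integrable φ₃ μ) :
    ∫ x, (c₁ * φ₁ x + (c₂ * φ₂ x + c₃ * φ₃ x)) ∂μ
      = c₁ * ∫ x, φ₁ x ∂μ + (c₂ * ∫ x, φ₂ x ∂μ + c₃ * ∫ x, φ₃ x ∂μ) := by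
  have k₁ : Integrable (fun x => c₁ * φ₁ x) μ := h₁.const_mul _
  have k₂₃ : Integrable (fun x => c₂ * φ₂ x + c₃ * φ₃ x) μ :=
    (h₂.const_mul _).add (h₃.const_mul _)
  rw [integral_add k₁ k₂₃, integral_const_mul, integral_comb2 μ c₂ c₃ φ₂ φ₃ h₂ h₃]

end helpers2

set_option maxHeartbeats 1000000 in
theorem gram_reverse_triangle {Ω : Type*} [MeasurableSpace Ω]
    (μ : Measure Ω) [SigmaFinite μ] (ρ f g h : Ω → ℝ) (m M : ℝ)
    (hm : 0 < m) (hmM : m < M)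
    (hρm : Measurable ρ) (hρpos : ∀ x, 0 < ρ x)
    (hfm : Measurable f) (hgm : Measurable g) (hhm : Measurable h)
    (hne : ∀ᵐ x ∂μ, h x ≠ 0)
    (hf2 : Integrable (fun x => ρ x * f x ^ 2) μ)
    (hg2 : Integrable (fun x => ρ x * g x ^ 2) μ)
    (hh2 : Integrable (fun x => ρ x * h x ^ 2) μ)
    (hfg : Integrable (fun x => ρ x * f x * g x) μ)
    (hfh : Integrable (fun x => ρ x * f x * h x) μ)
    (hgh : Integrable (fun x => ρ x * g x * h x) μ)
    (hsync : ∀ᵐ p ∂(μ.prod μ),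
      0 ≤ ((M * (g p.1 / h p.1) - f p.1 / h p.1) -
            (M * (g p.2 / h p.2) - f p.2 / h p.2)) *
          ((f p.1 / h p.1 - m * (g p.1 / h p.1)) -
            (f p.2 / h p.2 - m * (g p.2 / h p.2)))) :
    0 ≤ Real.sqrt (gramDet μ ρ h f f) + Real.sqrt (gramDet μ ρ h g g) -
        Real.sqrt (gramDet μ ρ h (f + g) (f + g)) ∧
      Real.sqrt (gramDet μ ρ h f f) + Real.sqrt (gramDet μ ρ h g g) -
        Real.sqrt (gramDet μ ρ h (f + g) (f + g)) ≤
        (1 / 2) * ((M - m) / Real.sqrt (M + m)) *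
          Real.sqrt (gramDet μ ρ h g g) := by
  have hM : (0:ℝ) < M := hm.trans hmM
  have hff : Integrable (fun x => ρ x * f x * f x) μ :=
    hf2.congr (Filter.Eventually.of_forall fun x => by ring)
  have hgg : Integrable (fun x => ρ x * g x * g x) μ :=
    hg2.congr (Filter.Eventually.of_forall fun x => by ring)
  -- abbreviations
  set Iff' := ∫ x, ρ x * f x * f x ∂μ with hIff
  set Igg := ∫ x, ρ x * g x * g x ∂μ with hIgg
  set Ihh := ∫ x, ρ x * h x ^ 2 ∂μ with hIhh
  set Ifg := ∫ x, ρ x * f x * g x ∂μ with hIfg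
  set Ifh := ∫ x, ρ x * f x * h x ∂μ with hIfh
  set Igh := ∫ x, ρ x * g x * h x ∂μ with hIgh
  -- nonnegativity
  have hAnn : 0 ≤ Iff' * Ihh - Ifh * Ifh := gram_nonneg' μ ρ h f hρpos hf2 hh2 hfh
  have hBnn : 0 ≤ Igg * Ihh - Igh * Igh := gram_nonneg' μ ρ h g hρpos hg2 hh2 hgh
  -- Cauchy-Schwarz for the Gram form
  have hquad : ∀ t : ℝ, 0 ≤ (Igg * Ihh - Igh * Igh) * (t * t)
      + (2 * (Ifg * Ihh - Ifh * Igh)) * t + (Iff' * Ihh - Ifh * Ifh) := by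
    intro t
    have hut2 : Integrable (fun x => ρ x * (f x + t * g x) ^ 2) μ :=
      ((hf2.add ((hfg.const_mul (2*t)).add (hg2.const_mul (t^2))))).congr
        (Filter.Eventually.of_forall fun x => by
          simp only [Pi.add_apply, Pi.sub_apply]; ring)
    have huth : Integrable (fun x => ρ x * (f x + t * g x) * h x) μ :=
      (hfh.add (hgh.const_mul t)).congr (Filter.Eventually.of_forall fun x => by
        simp only [Pi.add_apply, Pi.sub_apply]; ring)
    have h0 := gram_nonneg' μ ρ h (fun x => f x + t * g x) hρpos hut2 hh2 huth
    have e1 : ∫ x, ρ x * (f x + t * g x) * (f x + t * g x) ∂μ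
        = 1 * Iff' + (2*t * Ifg + t^2 * Igg) := by
      rw [show (fun x => ρ x * (f x + t * g x) * (f x + t * g x))
          = fun x => 1 * (ρ x * f x * f x) + (2*t * (ρ x * f x * g x)
            + t^2 * (ρ x * g x * g x)) from funext fun x => by ring]
      rw [integral_comb3 μ 1 (2*t) (t^2) _ _ _ hff hfg hgg]
    have e2 : ∫ x, ρ x * (f x + t * g x) * h x ∂μ = 1 * Ifh + t * Igh := by
      rw [show (fun x => ρ x * (f x + t * g x) * h x)
          = fun x => 1 * (ρ x * f x * h x) + t * (ρ x * g x * h x)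
          from funext fun x => by ring]
      rw [integral_comb2 μ 1 t _ _ hfh hgh]
    rw [e1, e2] at h0
    nlinarith [h0]
  have hdis := discrim_le_zero hquad
  rw [discrim] at hdis
  have hCsq : (Ifg * Ihh - Ifh * Igh)^2
      ≤ (Iff' * Ihh - Ifh * Ifh) * (Igg * Ihh - Igh * Igh) := by nlinarith [hdis]
  -- synchronicity
  have hne0 : μ {x | h x = 0} = 0 := by
    rw [ae_iff] at hne
    simpa only [ne_eq, not_not] using hne
  have hfst : ∀ᵐ p ∂(μ.prod μ), h p.1 ≠ 0 := by
    rw [ae_iff]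
    refine measure_mono_null (fun p hp => ?_)
      (?_ : (μ.prod μ) ({x | h x = 0} ×ˢ (Set.univ : Set Ω)) = 0)
    · exact Set.mem_prod.mpr ⟨not_not.mp hp, Set.mem_univ p.2⟩
    · rw [Measure.prod_prod, hne0, zero_mul]
  have hsnd : ∀ᵐ p ∂(μ.prod μ), h p.2 ≠ 0 := by
    rw [ae_iff]
    refine measure_mono_null (fun p hp => ?_)
      (?_ : (μ.prod μ) ((Set.univ : Set Ω) ×ˢ {x | h x = 0}) = 0)
    · exact Set.mem_prod.mpr ⟨Set.mem_univ p.1, not_not.mp hp⟩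
    · rw [Measure.prod_prod, hne0, mul_zero]
  have hT : ∀ᵐ p ∂(μ.prod μ), 0 ≤ ρ p.1 * ρ p.2 *
      (((M * g p.1 - f p.1) * h p.2 - (M * g p.2 - f p.2) * h p.1) *
        ((f p.1 - m * g p.1) * h p.2 - (f p.2 - m * g p.2) * h p.1)) := by
    filter_upwards [hsync, hfst, hsnd] with p hp h1 h2
    have e : ((M * g p.1 - f p.1) * h p.2 - (M * g p.2 - f p.2) * h p.1) *
        ((f p.1 - m * g p.1) * h p.2 - (f p.2 - m * g p.2) * h p.1)
        = (h p.1 * h p.2)^2 *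
          (((M * (g p.1 / h p.1) - f p.1 / h p.1) -
            (M * (g p.2 / h p.2) - f p.2 / h p.2)) *
          ((f p.1 / h p.1 - m * (g p.1 / h p.1)) -
            (f p.2 / h p.2 - m * (g p.2 / h p.2)))) := by
      field_simp
    rw [e]
    exact mul_nonneg (mul_nonneg (hρpos _).le (hρpos _).le)
      (mul_nonneg (sq_nonneg _) hp)
  have hab : Integrable (fun x => ρ x * ((M * g x - f x) * (f x - m * g x))) μ :=
    (((hfg.const_mul (M+m)).sub (hgg.const_mul (M*m))).sub hff).congr
      (Filter.Eventually.of_forall fun x => by simp only [Pi.add_apply, Pi.sub_apply]; ring)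
  have hah : Integrable (fun x => ρ x * ((M * g x - f x) * h x)) μ :=
    ((hgh.const_mul M).sub hfh).congr (Filter.Eventually.of_forall fun x => by
      simp only [Pi.add_apply, Pi.sub_apply]; ring)
  have hbh : Integrable (fun x => ρ x * ((f x - m * g x) * h x)) μ :=
    (hfh.sub (hgh.const_mul m)).congr (Filter.Eventually.of_forall fun x => by
      simp only [Pi.add_apply, Pi.sub_apply]; ring)
  have hs0 := sync_gram μ ρ h (fun x => M * g x - f x) (fun x => f x - m * g x)
    hab hah hbh hh2 hT
  have eab : ∫ x, ρ x * ((M * g x - f x) * (f x - m * g x)) ∂μ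
      = (M+m) * Ifg + ((-(M*m)) * Igg + (-1) * Iff') := by
    rw [show (fun x => ρ x * ((M * g x - f x) * (f x - m * g x)))
        = fun x => (M+m) * (ρ x * f x * g x) + ((-(M*m)) * (ρ x * g x * g x)
          + (-1) * (ρ x * f x * f x)) from funext fun x => by ring]
    rw [integral_comb3 μ _ _ _ _ _ _ hfg hgg hff]
  have eah : ∫ x, ρ x * ((M * g x - f x) * h x) ∂μ = M * Igh + (-1) * Ifh := by
    rw [show (fun x => ρ x * ((M * g x - f x) * h x))
        = fun x => M * (ρ x * g x * h x) + (-1) * (ρ x * f x * h x)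
        from funext fun x => by ring]
    rw [integral_comb2 μ _ _ _ _ hgh hfh]
  have ebh : ∫ x, ρ x * ((f x - m * g x) * h x) ∂μ = 1 * Ifh + (-m) * Igh := by
    rw [show (fun x => ρ x * ((f x - m * g x) * h x))
        = fun x => 1 * (ρ x * f x * h x) + (-m) * (ρ x * g x * h x)
        from funext fun x => by ring]
    rw [integral_comb2 μ _ _ _ _ hfh hgh]
  rw [eab, eah, ebh] at hs0
  have hsync2 : (Iff' * Ihh - Ifh * Ifh) + M*m*(Igg * Ihh - Igh * Igh)
      ≤ (M+m) * (Ifg * Ihh - Ifh * Igh) := by nlinarith [hs0]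
  -- positivity of C
  have hMm : (0:ℝ) < M + m := by linarith
  have hC0 : 0 ≤ Ifg * Ihh - Ifh * Igh := by
    have h1 : 0 ≤ (M+m) * (Ifg * Ihh - Ifh * Igh) :=
      le_trans (by linarith [hAnn, mul_nonneg (mul_nonneg hM.le hm.le) hBnn]) hsync2
    by_contra hcon
    push_neg at hcon
    have h2 := mul_neg_of_pos_of_neg hMm hcon
    linarith
  -- expansion of the Gram determinant of f+g
  have euu : ∫ x, ρ x * (f x + g x) * (f x + g x) ∂μ
      = 1 * Iff' + (2 * Ifg + 1 * Igg) := by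
    rw [show (fun x => ρ x * (f x + g x) * (f x + g x))
        = fun x => 1 * (ρ x * f x * f x) + (2 * (ρ x * f x * g x)
          + 1 * (ρ x * g x * g x)) from funext fun x => by ring]
    rw [integral_comb3 μ _ _ _ _ _ _ hff hfg hgg]
  have euh : ∫ x, ρ x * (f x + g x) * h x ∂μ = 1 * Ifh + 1 * Igh := by
    rw [show (fun x => ρ x * (f x + g x) * h x)
        = fun x => 1 * (ρ x * f x * h x) + 1 * (ρ x * g x * h x)
        from funext fun x => by ring]
    rw [integral_comb2 μ _ _ _ _ hfh hgh]
  simp only [gramDet, Pi.add_apply]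
  rw [← hIff, ← hIgg, ← hIhh, ← hIfh, ← hIgh, euu, euh]
  rw [show (1 * Iff' + (2 * Ifg + 1 * Igg)) * Ihh - (1 * Ifh + 1 * Igh) * (1 * Ifh + 1 * Igh)
      = (Iff' * Ihh - Ifh * Ifh) + (Igg * Ihh - Igh * Igh)
        + 2 * (Ifg * Ihh - Ifh * Igh) from by ring]
  have h1 := aux1 (Iff' * Ihh - Ifh * Ifh) (Igg * Ihh - Igh * Igh)
    (Ifg * Ihh - Ifh * Igh) hAnn hBnn hC0 hCsq
  constructor
  · linarith [h1]
  · rcases eq_or_lt_of_le (Real.sqrt_nonneg (Igg * Ihh - Igh * Igh)) with ht0 | ht0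
    · -- degenerate case: B = 0
      have hBq0 : Igg * Ihh - Igh * Igh = 0 :=
        le_antisymm (Real.sqrt_eq_zero'.mp ht0.symm) hBnn
      have hCq2 : (Ifg * Ihh - Ifh * Igh)^2 = 0 :=
        le_antisymm (by nlinarith [hCsq]) (sq_nonneg _)
      have hCq0 : Ifg * Ihh - Ifh * Igh = 0 := by
        have := sq_eq_zero_iff.mp hCq2
        exact this
      have hAq0 : Iff' * Ihh - Ifh * Ifh = 0 := by
        rw [hBq0, hCq0] at hsync2
        exact le_antisymm (by linarith) hAnn
      rw [hAq0, hBq0, hCq0]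
      norm_num
    · exact aux2 (Real.sqrt (Iff' * Ihh - Ifh * Ifh)) (Real.sqrt (Igg * Ihh - Igh * Igh))
        (Ifg * Ihh - Ifh * Igh) _ m M (Real.sqrt (M + m))
        (Real.sqrt_nonneg _) ht0 (Real.sqrt_nonneg _)
        (Real.sqrt_pos.mpr hMm) (Real.sq_sqrt hMm.le) hm hmM
        (by rw [Real.sq_sqrt (by linarith [hAnn, hBnn, hC0] : (0:ℝ) ≤ (Iff' * Ihh - Ifh * Ifh) + (Igg * Ihh - Igh * Igh) + 2 * (Ifg * Ihh - Ifh * Igh)),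
              Real.sq_sqrt hAnn, Real.sq_sqrt hBnn])
        (by rw [show Ifg * Ihh - Ifh * Igh
              = Real.sqrt ((Ifg * Ihh - Ifh * Igh)^2) from (Real.sqrt_sq hC0).symm,
            ← Real.sqrt_mul hAnn]
            exact Real.sqrt_le_sqrt hCsq)
        (by rw [Real.sq_sqrt hAnn, Real.sq_sqrt hBnn]; exact hsync2)
end
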